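/- arXiv:1808.08546 — 7 statements merged into one kernel-verified Lean document; each statement's English description precedes it below -/
import Mathlib

section
/- Let a, b, c, d be real numbers with a ≥ 1, b ≥ 1, a·b - 1 ≥ c², and a·b - 1 ≥ d². For θ ∈ ℝ let Γ_θ be the 4×4 real matrix with rows (a, 0, c·cos θ, d·sin θ), (0, a, -c·sin θ, d·cos θ), (c·cos θ, -c·sin θ, b, 0), (d·sin θ, d·cos θ, 0, b), and Γ₀ = Γ_θ at θ = 0. Then the set { 1 - √(det Γ₀ · det Γ_θ) / det((Γ₀ + Γ_θ)/2) : θ ∈ [0, π/2] } has greatest element 1 - (a·b - c²)·(a·b - d²) / ((a·b - c²/2)·(a·b - d²/2)). -/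
/-! The local rotation acts on the off-diagonal block `C` of `Γ₀ = [[a I, C], [Cᵀ, b I]]`
by a rotation, so `det Γ_θ = (ab - c²)(ab - d²)` does not depend on `θ`. The midpoint
`(Γ₀ + Γ_θ)/2` has the same shape, and its determinant is `(ab - c² t)(ab - d² t)` with
`t = (1 + cos θ)/2 ∈ [1/2, 1]`. This decreases in `t`, so the quantity is largest at `t = 1/2`,
i.e. at `θ = π/2`. -/

open Real Set Matrix

def twoModeCov {R : Type*} [Zero R] (a b p q r s : R) : Matrix (Fin 4) (Fin 4) R :=
  !![a, 0, p, q; 0, a, r, s; p, r, b, 0; q, s, 0, b]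

/-- With `C = !![p, q; r, s]` this is `det (a b I - Cᵀ C)`. -/
theorem det_twoModeCov {R : Type*} [CommRing R] (a b p q r s : R) :
    (twoModeCov a b p q r s).det =
      (a * b) ^ 2 - a * b * (p ^ 2 + q ^ 2 + r ^ 2 + s ^ 2) + (p * s - q * r) ^ 2 := by
  simp [twoModeCov, Matrix.det_succ_row_zero, Fin.sum_univ_succ, Fin.succAbove]
  ring

theorem half_smul_add_twoModeCov (a b p q r s p' q' r' s' : ℝ) :
    (1 / 2 : ℝ) • (twoModeCov a b p q r s + twoModeCov a b p' q' r' s') =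
      twoModeCov a b ((p + p') / 2) ((q + q') / 2) ((r + r') / 2) ((s + s') / 2) := by
  ext i j
  fin_cases i <;> fin_cases j <;> simp [twoModeCov] <;> ring

noncomputable def rotatedCov (a b c d θ : ℝ) : Matrix (Fin 4) (Fin 4) ℝ :=
  twoModeCov a b (c * cos θ) (d * sin θ) (-c * sin θ) (d * cos θ)

theorem det_rotatedCov (a b c d θ : ℝ) :
    (rotatedCov a b c d θ).det = (a * b - c ^ 2) * (a * b - d ^ 2) := by
  rw [rotatedCov, det_twoModeCov]
  linear_combination (c ^ 2 * d ^ 2 * (1 + cos θ ^ 2 + sin θ ^ 2) - a * b * (c ^ 2 + d ^ 2))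
    * sin_sq_add_cos_sq θ

theorem det_half_smul_rotatedCov_add (a b c d θ : ℝ) :
    ((1 / 2 : ℝ) • (rotatedCov a b c d 0 + rotatedCov a b c d θ)).det =
      (a * b - c ^ 2 * ((1 + cos θ) / 2)) * (a * b - d ^ 2 * ((1 + cos θ) / 2)) := by
  rw [rotatedCov, rotatedCov, half_smul_add_twoModeCov, det_twoModeCov, cos_zero, sin_zero]
  linear_combination (c ^ 2 * d ^ 2 * (3 + 4 * cos θ + cos θ ^ 2 + sin θ ^ 2) / 16
    - a * b * (c ^ 2 + d ^ 2) / 4) * sin_sq_add_cos_sq θ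

theorem one_add_cos_div_two_mem_Icc {θ : ℝ} (hθ : θ ∈ Icc 0 (π / 2)) :
    (1 + cos θ) / 2 ∈ Icc (1 / 2) 1 := by
  have := cos_nonneg_of_mem_Icc ⟨by linarith [hθ.1, pi_pos], hθ.2⟩
  constructor <;> linarith [cos_le_one θ]

theorem stmt_4_general (a b c d : ℝ)
    (hc : a * b - 1 ≥ c ^ 2) (hd : a * b - 1 ≥ d ^ 2)
    (Γ : ℝ → Matrix (Fin 4) (Fin 4) ℝ)
    (hΓ : ∀ θ : ℝ, Γ θ =
      !![a, 0, c * Real.cos θ, d * Real.sin θ;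
         0, a, -c * Real.sin θ, d * Real.cos θ;
         c * Real.cos θ, -c * Real.sin θ, b, 0;
         d * Real.sin θ, d * Real.cos θ, 0, b]) :
    IsGreatest
      {x : ℝ | ∃ θ ∈ Set.Icc (0 : ℝ) (π / 2),
        x = 1 - Real.sqrt ((Γ 0).det * (Γ θ).det) / ((1 / 2 : ℝ) • (Γ 0 + Γ θ)).det}
      (1 - (a * b - c ^ 2) * (a * b - d ^ 2) /
        ((a * b - c ^ 2 / 2) * (a * b - d ^ 2 / 2))) := by
  obtain rfl : Γ = rotatedCov a b c d := funext hΓ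
  have hX : 0 ≤ (a * b - c ^ 2) * (a * b - d ^ 2) := mul_nonneg (by linarith) (by linarith)
  simp only [det_rotatedCov, sqrt_mul_self hX, det_half_smul_rotatedCov_add]
  refine ⟨⟨π / 2, ⟨by positivity, le_rfl⟩, by rw [cos_pi_div_two]; ring_nf⟩, ?_⟩
  rintro _ ⟨θ, hθ, rfl⟩
  obtain ⟨ht, ht₁⟩ := one_add_cos_div_two_mem_Icc hθ
  generalize (1 + cos θ) / 2 = t at ht ht₁ ⊢
  have hct : 1 ≤ a * b - c ^ 2 * t := by nlinarith [mul_le_mul_of_nonneg_left ht₁ (sq_nonneg c)]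
  have hdt : 1 ≤ a * b - d ^ 2 * t := by nlinarith [mul_le_mul_of_nonneg_left ht₁ (sq_nonneg d)]
  gcongr 1 - _ / ?_
  exact mul_le_mul (by nlinarith [sq_nonneg c]) (by nlinarith [sq_nonneg d]) (by linarith)
    (by nlinarith [sq_nonneg c])

theorem stmt_4 (a b c d : ℝ) (ha : 1 ≤ a) (hb : 1 ≤ b)
    (hc : a * b - 1 ≥ c ^ 2) (hd : a * b - 1 ≥ d ^ 2)
    (Γ : ℝ → Matrix (Fin 4) (Fin 4) ℝ)
    (hΓ : ∀ θ : ℝ, Γ θ =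
      !![a, 0, c * Real.cos θ, d * Real.sin θ;
         0, a, -c * Real.sin θ, d * Real.cos θ;
         c * Real.cos θ, -c * Real.sin θ, b, 0;
         d * Real.sin θ, d * Real.cos θ, 0, b]) :
    IsGreatest
      {x : ℝ | ∃ θ ∈ Set.Icc (0 : ℝ) (π / 2),
        x = 1 - Real.sqrt ((Γ 0).det * (Γ θ).det) / ((1 / 2 : ℝ) • (Γ 0 + Γ θ)).det}
      (1 - (a * b - c ^ 2) * (a * b - d ^ 2) /
        ((a * b - c ^ 2 / 2) * (a * b - d ^ 2 / 2))) :=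
  stmt_4_general a b c d hc hd Γ hΓ
end

section
/- Let Γ = fromBlocks A C Cᵀ B be a real symmetric positive definite matrix of size (2n+2m)×(2n+2m), where A is 2n×2n, B is 2m×2m, and C is 2n×2m. Let S be a 2n×2n real invertible matrix with S·A·Sᵀ = A, and set Γ_S = fromBlocks A (S·C) (Cᵀ·Sᵀ) B. Then 0 ≤ 1 - √(det Γ · det Γ_S) / det((Γ + Γ_S)/2) ≤ 1 - det(B - Cᵀ·A⁻¹·C)/det B < 1. -/
/-!
Write `Γ = [[A, C], [Cᵀ, B]]` and `Γ_S = [[A, SC], [(SC)ᵀ, B]]`. Since `S A Sᵀ = A` gives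
`Sᵀ A⁻¹ S = A⁻¹`, both matrices have the same Schur complement `B - Cᵀ A⁻¹ C`, hence the same
determinant `det A · det (B - Cᵀ A⁻¹ C)`. Their average is the block matrix with off-diagonal block
`C̄ = (C + SC)/2`, and by the parallelogram identity its Schur complement is
`(B - Cᵀ A⁻¹ C) + D̄ᵀ A⁻¹ D̄` with `D̄ = (C - SC)/2`. So the middle ratio equals
`det (B - Cᵀ A⁻¹ C) / det (B - C̄ᵀ A⁻¹ C̄)`, and everything follows from the monotonicity of the
determinant on positive definite matrices:
`det (B - Cᵀ A⁻¹ C) ≤ det (B - C̄ᵀ A⁻¹ C̄) ≤ det B`.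
-/

open Matrix

namespace Matrix

lemma PosSemidef.one_le_det_one_add {q : Type*} [Fintype q] [DecidableEq q] {Z : Matrix q q ℝ}
    (hZ : Z.PosSemidef) : 1 ≤ (1 + Z).det := by
  set U : Matrix q q ℝ := (hZ.isHermitian.eigenvectorUnitary : Matrix q q ℝ)
  have hUU : U * star U = 1 := Unitary.coe_mul_star_self _
  have hdiag : 1 + Z = U * diagonal (fun i => 1 + hZ.isHermitian.eigenvalues i) * star U := by
    rw [← diagonal_add, diagonal_one, Matrix.mul_add, Matrix.add_mul, Matrix.mul_one, hUU]
    conv_lhs => rw [hZ.isHermitian.spectral_theorem, Unitary.conjStarAlgAut_apply]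
    rfl
  rw [hdiag, det_mul, det_mul, mul_right_comm, ← det_mul, hUU, det_one, one_mul, det_diagonal]
  exact Finset.one_le_prod fun i _ => le_add_of_nonneg_right (hZ.eigenvalues_nonneg i)

open scoped MatrixOrder in
lemma PosDef.det_le_det_add {q : Type*} [Fintype q] [DecidableEq q] {X Y : Matrix q q ℝ}
    (hX : X.PosDef) (hY : Y.PosSemidef) : X.det ≤ (X + Y).det := by
  obtain ⟨F, rfl⟩ := CStarAlgebra.nonneg_iff_eq_star_mul_self.mp hY.nonneg
  rw [det_add_mul _ _ (isUnit_iff_ne_zero.mpr hX.det_pos.ne')]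
  refine le_mul_of_one_le_right hX.det_pos.le (PosSemidef.one_le_det_one_add ?_)
  exact hX.inv.posSemidef.mul_mul_conjTranspose_same F

lemma PosDef.det_sub_le_det {q : Type*} [Fintype q] [DecidableEq q] {X Y : Matrix q q ℝ}
    (hXY : (X - Y).PosDef) (hY : Y.PosSemidef) : (X - Y).det ≤ X.det := by
  simpa using hXY.det_le_det_add hY

lemma transpose_mul_inv_mul_eq_inv {p : Type*} [Fintype p] [DecidableEq p] {A S : Matrix p p ℝ}
    (hS : IsUnit S) (hSA : S * A * Sᵀ = A) : Sᵀ * A⁻¹ * S = A⁻¹ := by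
  have hdet : IsUnit S.det := (isUnit_iff_isUnit_det S).mp hS
  have hA : A⁻¹ = Sᵀ⁻¹ * (A⁻¹ * S⁻¹) := by
    conv_lhs => rw [← hSA]
    rw [Matrix.mul_inv_rev, Matrix.mul_inv_rev]
  nth_rewrite 1 [hA]
  rw [mul_nonsing_inv_cancel_left _ _ (by rwa [det_transpose]),
    nonsing_inv_mul_cancel_right _ _ hdet]

section Blocks

variable {p q : Type*} {A : Matrix p p ℝ} {B : Matrix q q ℝ} {C C' : Matrix p q ℝ}

lemma PosDef.fromBlocks_left (h : (fromBlocks A C Cᵀ B).PosDef) : A.PosDef :=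
  h.submatrix Sum.inl_injective

lemma half_smul_fromBlocks_add_fromBlocks :
    (1 / 2 : ℝ) • (fromBlocks A C Cᵀ B + fromBlocks A C' C'ᵀ B) =
      fromBlocks A ((1 / 2 : ℝ) • (C + C')) ((1 / 2 : ℝ) • (C + C'))ᵀ B := by
  rw [fromBlocks_add, fromBlocks_smul, transpose_smul, transpose_add]
  congr 1 <;> module

lemma transpose_mul_mul_parallelogram [Fintype p] (Q : Matrix p p ℝ) :
    ((1 / 2 : ℝ) • (C + C'))ᵀ * Q * ((1 / 2 : ℝ) • (C + C')) +
        ((1 / 2 : ℝ) • (C - C'))ᵀ * Q * ((1 / 2 : ℝ) • (C - C')) =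
      (1 / 2 : ℝ) • (Cᵀ * Q * C + C'ᵀ * Q * C') := by
  simp only [transpose_smul, transpose_add, transpose_sub, Matrix.smul_mul, Matrix.mul_smul,
    Matrix.add_mul, Matrix.mul_add, Matrix.sub_mul, Matrix.mul_sub]
  module

lemma PosDef.transpose_mul_inv_mul [Fintype p] [DecidableEq p] [Fintype q] (hA : A.PosDef)
    (F : Matrix p q ℝ) : (Fᵀ * A⁻¹ * F).PosSemidef := by
  simpa only [conjTranspose_eq_transpose_of_trivial] using
    hA.inv.posSemidef.conjTranspose_mul_mul_same F

lemma schur_half_add_eq [Fintype p] [DecidableEq p] (hC' : C'ᵀ * A⁻¹ * C' = Cᵀ * A⁻¹ * C) :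
    B - ((1 / 2 : ℝ) • (C + C'))ᵀ * A⁻¹ * ((1 / 2 : ℝ) • (C + C')) =
      (B - Cᵀ * A⁻¹ * C) + ((1 / 2 : ℝ) • (C - C'))ᵀ * A⁻¹ * ((1 / 2 : ℝ) • (C - C')) := by
  have h : ((1 / 2 : ℝ) • (C + C'))ᵀ * A⁻¹ * ((1 / 2 : ℝ) • (C + C')) +
      ((1 / 2 : ℝ) • (C - C'))ᵀ * A⁻¹ * ((1 / 2 : ℝ) • (C - C')) = Cᵀ * A⁻¹ * C := by
    rw [transpose_mul_mul_parallelogram, hC']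
    module
  rw [← h]
  abel

variable [Fintype p] [DecidableEq p] [Fintype q] [DecidableEq q]

lemma det_fromBlocks_of_isUnit (hA : IsUnit A) (D : Matrix q p ℝ) :
    (fromBlocks A C D B).det = A.det * (B - D * A⁻¹ * C).det := by
  have := hA.invertible
  rw [det_fromBlocks₁₁, invOf_eq_nonsing_inv]

lemma PosDef.fromBlocks_schur (h : (fromBlocks A C Cᵀ B).PosDef) :
    (B - Cᵀ * A⁻¹ * C).PosDef := by
  have hA := h.fromBlocks_left
  have := hA.isUnit.invertible
  have hpsd : (B - Cᵀ * A⁻¹ * C).PosSemidef := by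
    simpa only [conjTranspose_eq_transpose_of_trivial] using
      (PosDef.fromBlocks₁₁ C B hA).mp h.posSemidef
  refine hpsd.posDef_iff_det_ne_zero.mpr fun h0 => h.det_pos.ne' ?_
  rw [det_fromBlocks_of_isUnit hA.isUnit, h0, mul_zero]

lemma sqrt_det_mul_det_div_det_half_add (hA : A.PosDef) (hC : 0 ≤ (B - Cᵀ * A⁻¹ * C).det)
    (hC' : C'ᵀ * A⁻¹ * C' = Cᵀ * A⁻¹ * C) :
    √((fromBlocks A C Cᵀ B).det * (fromBlocks A C' C'ᵀ B).det) /
        ((1 / 2 : ℝ) • (fromBlocks A C Cᵀ B + fromBlocks A C' C'ᵀ B)).det =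
      (B - Cᵀ * A⁻¹ * C).det /
        (B - ((1 / 2 : ℝ) • (C + C'))ᵀ * A⁻¹ * ((1 / 2 : ℝ) • (C + C'))).det := by
  rw [half_smul_fromBlocks_add_fromBlocks, det_fromBlocks_of_isUnit hA.isUnit,
    det_fromBlocks_of_isUnit hA.isUnit, det_fromBlocks_of_isUnit hA.isUnit, hC',
    Real.sqrt_mul_self (mul_nonneg hA.det_pos.le hC), mul_div_mul_left _ _ hA.det_pos.ne']

end Blocks

end Matrix

theorem stmt_6 (n m : ℕ)
    (A : Matrix (Fin (2 * n)) (Fin (2 * n)) ℝ)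
    (B : Matrix (Fin (2 * m)) (Fin (2 * m)) ℝ)
    (C : Matrix (Fin (2 * n)) (Fin (2 * m)) ℝ)
    (hΓ : (Matrix.fromBlocks A C Cᵀ B).PosDef)
    (S : Matrix (Fin (2 * n)) (Fin (2 * n)) ℝ)
    (hS : IsUnit S) (hSA : S * A * Sᵀ = A) :
    0 ≤ 1 - Real.sqrt ((Matrix.fromBlocks A C Cᵀ B).det *
            (Matrix.fromBlocks A (S * C) (Cᵀ * Sᵀ) B).det) /
          ((1 / 2 : ℝ) • (Matrix.fromBlocks A C Cᵀ B +
              Matrix.fromBlocks A (S * C) (Cᵀ * Sᵀ) B)).det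
    ∧ 1 - Real.sqrt ((Matrix.fromBlocks A C Cᵀ B).det *
            (Matrix.fromBlocks A (S * C) (Cᵀ * Sᵀ) B).det) /
          ((1 / 2 : ℝ) • (Matrix.fromBlocks A C Cᵀ B +
              Matrix.fromBlocks A (S * C) (Cᵀ * Sᵀ) B)).det
        ≤ 1 - (B - Cᵀ * A⁻¹ * C).det / B.det
    ∧ 1 - (B - Cᵀ * A⁻¹ * C).det / B.det < 1 := by
  have hA := hΓ.fromBlocks_left
  have hSchur := hΓ.fromBlocks_schur
  have hSC : (S * C)ᵀ * A⁻¹ * (S * C) = Cᵀ * A⁻¹ * C := by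
    rw [transpose_mul, show Cᵀ * Sᵀ * A⁻¹ * (S * C) = Cᵀ * (Sᵀ * A⁻¹ * S) * C by
      simp only [Matrix.mul_assoc], transpose_mul_inv_mul_eq_inv hS hSA]
  have hD := hA.transpose_mul_inv_mul ((1 / 2 : ℝ) • (C - S * C))
  have hMSchur := hSchur.add_posSemidef hD
  have hSchur_le := hSchur.det_le_det_add hD
  rw [← schur_half_add_eq hSC] at hMSchur hSchur_le
  have hMSchur_le := hMSchur.det_sub_le_det (hA.transpose_mul_inv_mul _)
  rw [← transpose_mul, sqrt_det_mul_det_div_det_half_add hA hSchur.det_pos.le hSC]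
  exact ⟨sub_nonneg.2 ((div_le_one hMSchur.det_pos).2 hSchur_le),
    sub_le_sub_left (div_le_div_of_nonneg_left hSchur.det_pos.le hMSchur.det_pos hMSchur_le) 1,
    sub_lt_self 1 (div_pos hSchur.det_pos (hMSchur.det_pos.trans_le hMSchur_le))⟩
end

section
/- Let a, b, c, d be real numbers with a ≥ 1, b ≥ 1, a·b - 1 ≥ c², a·b - 1 ≥ d², and let n₁, n₂, n₃, n₄ be nonnegative reals with n₁ + n₂ + n₃ + n₄ > 0. Define F : ℝ → ℝ by F(t) = (a·b - c²·t)·(a·b - d²·t)·n₁ + a·(a·b - c²·t)·n₂ + a·(a·b - d²·t)·n₃ + a²·n₄. Then the set { 1 - F(1)/F((1 + cos θ)/2) : θ ∈ [0, π/2] } has greatest element 1 - F(1)/F(1/2), attained at θ = π/2. -/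
open Real Set

theorem stmt_10 (a b c d n₁ n₂ n₃ n₄ : ℝ) (ha : 1 ≤ a) (hb : 1 ≤ b)
    (hc : a * b - 1 ≥ c ^ 2) (hd : a * b - 1 ≥ d ^ 2)
    (hn₁ : 0 ≤ n₁) (hn₂ : 0 ≤ n₂) (hn₃ : 0 ≤ n₃) (hn₄ : 0 ≤ n₄)
    (hpos : 0 < n₁ + n₂ + n₃ + n₄)
    (F : ℝ → ℝ)
    (hF : ∀ t : ℝ, F t = (a * b - c ^ 2 * t) * (a * b - d ^ 2 * t) * n₁
        + a * (a * b - c ^ 2 * t) * n₂ + a * (a * b - d ^ 2 * t) * n₃ + a ^ 2 * n₄) :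
    IsGreatest
      {x : ℝ | ∃ θ ∈ Set.Icc (0 : ℝ) (π / 2), x = 1 - F 1 / F ((1 + Real.cos θ) / 2)}
      (1 - F 1 / F (1 / 2))
    ∧ 1 - F 1 / F ((1 + Real.cos (π / 2)) / 2) = 1 - F 1 / F (1 / 2) := by
  have hc2 : (0:ℝ) ≤ c ^ 2 := sq_nonneg c
  have hd2 : (0:ℝ) ≤ d ^ 2 := sq_nonneg d
  -- factors are ≥ 1 for t ≤ 1
  have hcf : ∀ t : ℝ, t ≤ 1 → (1:ℝ) ≤ a * b - c ^ 2 * t := by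
    intro t ht; nlinarith
  have hdf : ∀ t : ℝ, t ≤ 1 → (1:ℝ) ≤ a * b - d ^ 2 * t := by
    intro t ht; nlinarith
  have hFpos : ∀ t : ℝ, t ≤ 1 → 0 < F t := by
    intro t ht
    have h1 := hcf t ht
    have h2 := hdf t ht
    have hXY : (1:ℝ) ≤ (a * b - c ^ 2 * t) * (a * b - d ^ 2 * t) := by nlinarith
    have haX : (1:ℝ) ≤ a * (a * b - c ^ 2 * t) := by nlinarith
    have haY : (1:ℝ) ≤ a * (a * b - d ^ 2 * t) := by nlinarith
    have ha2 : (1:ℝ) ≤ a ^ 2 := by nlinarith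
    have t1 : n₁ ≤ (a * b - c ^ 2 * t) * (a * b - d ^ 2 * t) * n₁ := by
      nlinarith [mul_le_mul_of_nonneg_right hXY hn₁]
    have t2 : n₂ ≤ a * (a * b - c ^ 2 * t) * n₂ := by
      nlinarith [mul_le_mul_of_nonneg_right haX hn₂]
    have t3 : n₃ ≤ a * (a * b - d ^ 2 * t) * n₃ := by
      nlinarith [mul_le_mul_of_nonneg_right haY hn₃]
    have t4 : n₄ ≤ a ^ 2 * n₄ := by
      nlinarith [mul_le_mul_of_nonneg_right ha2 hn₄]
    rw [hF]
    linarith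
  have hFmono : ∀ s t : ℝ, s ≤ t → t ≤ 1 → F t ≤ F s := by
    intro s t hst ht
    have h1 := hcf t ht
    have h2 := hdf t ht
    have h3 : c ^ 2 * s ≤ c ^ 2 * t := mul_le_mul_of_nonneg_left hst hc2
    have h4 : d ^ 2 * s ≤ d ^ 2 * t := mul_le_mul_of_nonneg_left hst hd2
    have hXs : a * b - c ^ 2 * t ≤ a * b - c ^ 2 * s := by linarith
    have hYs : a * b - d ^ 2 * t ≤ a * b - d ^ 2 * s := by linarith
    have hprod : (a * b - c ^ 2 * t) * (a * b - d ^ 2 * t)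
        ≤ (a * b - c ^ 2 * s) * (a * b - d ^ 2 * s) :=
      mul_le_mul hXs hYs (by linarith) (by linarith)
    have t1 := mul_le_mul_of_nonneg_right hprod hn₁
    have t2 := mul_le_mul_of_nonneg_right
      (mul_le_mul_of_nonneg_left hXs (by linarith : (0:ℝ) ≤ a)) hn₂
    have t3 := mul_le_mul_of_nonneg_right
      (mul_le_mul_of_nonneg_left hYs (by linarith : (0:ℝ) ≤ a)) hn₃
    rw [hF, hF]
    linarith
  have hF1 : 0 ≤ F 1 := le_of_lt (hFpos 1 le_rfl)
  have heq : (1 + Real.cos (π / 2)) / 2 = (1:ℝ) / 2 := by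
    rw [Real.cos_pi_div_two]; norm_num
  refine ⟨⟨⟨π / 2, ⟨by positivity, le_rfl⟩, by rw [heq]⟩, ?_⟩, by rw [heq]⟩
  rintro x ⟨θ, ⟨hθ0, hθ1⟩, rfl⟩
  set t := (1 + Real.cos θ) / 2 with htdef
  have hcos0 : 0 ≤ Real.cos θ :=
    Real.cos_nonneg_of_mem_Icc ⟨by linarith [Real.pi_pos], hθ1⟩
  have hcos1 : Real.cos θ ≤ 1 := Real.cos_le_one θ
  have ht1 : t ≤ 1 := by rw [htdef]; linarith
  have ht2 : (1:ℝ)/2 ≤ t := by rw [htdef]; linarith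
  have hle : F t ≤ F (1/2) := hFmono (1/2) t ht2 ht1
  have hpos' : 0 < F t := hFpos t ht1
  have : F 1 / F (1/2) ≤ F 1 / F t :=
    div_le_div_of_nonneg_left hF1 hpos' hle
  linarith
end

section
/- Let a, b, c, d be real numbers with a ≥ 1, b ≥ 1, a·b - 1 ≥ c², a·b - 1 ≥ d², and let n₂, n₃, n₄ be nonnegative reals. Set α = (a·b - c²)·(a·b - d²), β = (a·b - c²/2)·(a·b - d²/2), γ = a·(a·b - c²)·n₂ + a·(a·b - d²)·n₃ + a²·n₄, and δ = a·(a·b - c²/2)·n₂ + a·(a·b - d²/2)·n₃ + a²·n₄. Then γ·β - α·δ ≥ 0. -/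
theorem stmt_11 (a b c d n₂ n₃ n₄ : ℝ) (ha : 1 ≤ a) (hb : 1 ≤ b)
    (hc : a * b - 1 ≥ c ^ 2) (hd : a * b - 1 ≥ d ^ 2)
    (hn₂ : 0 ≤ n₂) (hn₃ : 0 ≤ n₃) (hn₄ : 0 ≤ n₄) :
    (a * (a * b - c ^ 2) * n₂ + a * (a * b - d ^ 2) * n₃ + a ^ 2 * n₄) *
        ((a * b - c ^ 2 / 2) * (a * b - d ^ 2 / 2)) -
      (a * b - c ^ 2) * (a * b - d ^ 2) *
        (a * (a * b - c ^ 2 / 2) * n₂ + a * (a * b - d ^ 2 / 2) * n₃ + a ^ 2 * n₄) ≥ 0 := by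
  have ha0 : 0 < a := lt_of_lt_of_le one_pos ha
  have hX : (1:ℝ) ≤ a * b - c ^ 2 := by nlinarith
  have hY : (1:ℝ) ≤ a * b - d ^ 2 := by nlinarith
  have h1 : 0 ≤ a * (a * b - c ^ 2) * n₂ * ((a * b - c ^ 2 / 2) * (d ^ 2 / 2)) := by
    have : (0:ℝ) ≤ a * b - c ^ 2 / 2 := by nlinarith
    have h := sq_nonneg d
    positivity
  have h2 : 0 ≤ a * (a * b - d ^ 2) * n₃ * ((a * b - d ^ 2 / 2) * (c ^ 2 / 2)) := by
    have : (0:ℝ) ≤ a * b - d ^ 2 / 2 := by nlinarith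
    have h := sq_nonneg c
    positivity
  have h3 : 0 ≤ a ^ 2 * n₄ * ((a * b) * (c ^ 2 + d ^ 2) / 2 - 3 * c ^ 2 * d ^ 2 / 4) := by
    have : (0:ℝ) ≤ (a * b) * (c ^ 2 + d ^ 2) / 2 - 3 * c ^ 2 * d ^ 2 / 4 := by
      nlinarith [sq_nonneg (c*d), sq_nonneg c, sq_nonneg d]
    positivity
  nlinarith [h1, h2, h3]
end

section
/- Let a, b, c, d be real numbers with a ≥ 1, b ≥ 1, a·b - 1 ≥ c², a·b - 1 ≥ d², and let n₁, n₂, n₃, n₄ be nonnegative reals with n₁ + n₂ + n₃ + n₄ > 0. Set α = (a·b - c²)·(a·b - d²), β = (a·b - c²/2)·(a·b - d²/2), γ = a·(a·b - c²)·n₂ + a·(a·b - d²)·n₃ + a²·n₄, and δ = a·(a·b - c²/2)·n₂ + a·(a·b - d²/2)·n₃ + a²·n₄. Then 0 ≤ 1 - (α·n₁ + γ)/(β·n₁ + δ) ≤ 1 - α/β. -/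
private lemma cross_aux (a b c d n₂ n₃ n₄ : ℝ) (ha : 1 ≤ a) (hb : 1 ≤ b)
    (hc : c ^ 2 ≤ a * b - 1) (hd : d ^ 2 ≤ a * b - 1)
    (hn₂ : 0 ≤ n₂) (hn₃ : 0 ≤ n₃) (hn₄ : 0 ≤ n₄) :
    ((a * b - c ^ 2) * (a * b - d ^ 2)) *
        (a * (a * b - c ^ 2 / 2) * n₂ + a * (a * b - d ^ 2 / 2) * n₃ + a ^ 2 * n₄) ≤
      ((a * b - c ^ 2 / 2) * (a * b - d ^ 2 / 2)) *
        (a * (a * b - c ^ 2) * n₂ + a * (a * b - d ^ 2) * n₃ + a ^ 2 * n₄) := by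
  have ha0 : (0 : ℝ) < a := by linarith
  have hP : (1 : ℝ) ≤ a * b - c ^ 2 := by linarith
  have hQ : (1 : ℝ) ≤ a * b - d ^ 2 := by linarith
  have hP' : (1 : ℝ) ≤ a * b - c ^ 2 / 2 := by nlinarith [sq_nonneg c]
  have hQ' : (1 : ℝ) ≤ a * b - d ^ 2 / 2 := by nlinarith [sq_nonneg d]
  have e : ((a * b - c ^ 2 / 2) * (a * b - d ^ 2 / 2)) *
        (a * (a * b - c ^ 2) * n₂ + a * (a * b - d ^ 2) * n₃ + a ^ 2 * n₄) -
      ((a * b - c ^ 2) * (a * b - d ^ 2)) *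
        (a * (a * b - c ^ 2 / 2) * n₂ + a * (a * b - d ^ 2 / 2) * n₃ + a ^ 2 * n₄) =
      a * n₂ * ((a * b - c ^ 2) * (a * b - c ^ 2 / 2)) * (d ^ 2 / 2) +
      a * n₃ * ((a * b - d ^ 2) * (a * b - d ^ 2 / 2)) * (c ^ 2 / 2) +
      a ^ 2 * n₄ * ((a * b) * (c ^ 2 + d ^ 2) / 2 - 3 / 4 * (c ^ 2 * d ^ 2)) := by
    ring
  have t1 : 0 ≤ a * n₂ * ((a * b - c ^ 2) * (a * b - c ^ 2 / 2)) * (d ^ 2 / 2) := by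
    have : (0:ℝ) ≤ (a * b - c ^ 2) * (a * b - c ^ 2 / 2) := by nlinarith
    positivity
  have t2 : 0 ≤ a * n₃ * ((a * b - d ^ 2) * (a * b - d ^ 2 / 2)) * (c ^ 2 / 2) := by
    have : (0:ℝ) ≤ (a * b - d ^ 2) * (a * b - d ^ 2 / 2) := by nlinarith
    positivity
  have t3 : 0 ≤ a ^ 2 * n₄ * ((a * b) * (c ^ 2 + d ^ 2) / 2 - 3 / 4 * (c ^ 2 * d ^ 2)) := by
    have h1 : 0 ≤ c ^ 2 * (a * b - 1 - d ^ 2) :=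
      mul_nonneg (sq_nonneg c) (by linarith)
    have h2 : 0 ≤ d ^ 2 * (a * b - 1 - c ^ 2) :=
      mul_nonneg (sq_nonneg d) (by linarith)
    have h3 : 0 ≤ c ^ 2 * d ^ 2 := mul_nonneg (sq_nonneg c) (sq_nonneg d)
    have h4 : 0 ≤ (a * b) * (c ^ 2 + d ^ 2) / 2 - 3 / 4 * (c ^ 2 * d ^ 2) := by
      nlinarith [sq_nonneg c, sq_nonneg d]
    exact mul_nonneg (mul_nonneg (sq_nonneg a) hn₄) h4
  linarith


theorem stmt_12 (a b c d n₁ n₂ n₃ n₄ : ℝ) (ha : 1 ≤ a) (hb : 1 ≤ b)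
    (hc : a * b - 1 ≥ c ^ 2) (hd : a * b - 1 ≥ d ^ 2)
    (hn₁ : 0 ≤ n₁) (hn₂ : 0 ≤ n₂) (hn₃ : 0 ≤ n₃) (hn₄ : 0 ≤ n₄)
    (hpos : 0 < n₁ + n₂ + n₃ + n₄)
    (α β γ δ : ℝ)
    (hα : α = (a * b - c ^ 2) * (a * b - d ^ 2))
    (hβ : β = (a * b - c ^ 2 / 2) * (a * b - d ^ 2 / 2))
    (hγ : γ = a * (a * b - c ^ 2) * n₂ + a * (a * b - d ^ 2) * n₃ + a ^ 2 * n₄)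
    (hδ : δ = a * (a * b - c ^ 2 / 2) * n₂ + a * (a * b - d ^ 2 / 2) * n₃ + a ^ 2 * n₄) :
    0 ≤ 1 - (α * n₁ + γ) / (β * n₁ + δ) ∧ 1 - (α * n₁ + γ) / (β * n₁ + δ) ≤ 1 - α / β := by
  have hP : (1:ℝ) ≤ a * b - c ^ 2 := by nlinarith
  have hQ : (1:ℝ) ≤ a * b - d ^ 2 := by nlinarith
  have hP' : (1:ℝ) ≤ a * b - c ^ 2 / 2 := by nlinarith [sq_nonneg c]
  have hQ' : (1:ℝ) ≤ a * b - d ^ 2 / 2 := by nlinarith [sq_nonneg d]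
  have ha0 : (0:ℝ) < a := by linarith
  have hαpos : 0 < α := by rw [hα]; exact mul_pos (by linarith) (by linarith)
  have hβpos : 0 < β := by rw [hβ]; exact mul_pos (by linarith) (by linarith)
  have hαβ : α ≤ β := by rw [hα, hβ]; nlinarith [sq_nonneg c, sq_nonneg d]
  have hγδ : γ ≤ δ := by
    rw [hγ, hδ]
    have h1 : a * (a * b - c ^ 2) * n₂ ≤ a * (a * b - c ^ 2 / 2) * n₂ :=
      mul_le_mul_of_nonneg_right
        (mul_le_mul_of_nonneg_left (by linarith [sq_nonneg c]) ha0.le) hn₂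
    have h2 : a * (a * b - d ^ 2) * n₃ ≤ a * (a * b - d ^ 2 / 2) * n₃ :=
      mul_le_mul_of_nonneg_right
        (mul_le_mul_of_nonneg_left (by linarith [sq_nonneg d]) ha0.le) hn₃
    linarith
  have hγ0 : 0 ≤ γ := by
    rw [hγ]
    have t1 : (0:ℝ) ≤ a * (a * b - c ^ 2) * n₂ :=
      mul_nonneg (mul_nonneg ha0.le (by linarith)) hn₂
    have t2 : (0:ℝ) ≤ a * (a * b - d ^ 2) * n₃ :=
      mul_nonneg (mul_nonneg ha0.le (by linarith)) hn₃
    have t3 : (0:ℝ) ≤ a ^ 2 * n₄ := mul_nonneg (sq_nonneg a) hn₄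
    linarith
  have hD : 0 < β * n₁ + δ := by
    have hβ1 : (1:ℝ) ≤ β := by
      rw [hβ]; exact le_trans hP' (le_mul_of_one_le_right (by linarith) hQ')
    have k1 : n₁ ≤ β * n₁ := le_mul_of_one_le_left hn₁ hβ1
    have k2 : n₂ ≤ a * (a * b - c ^ 2 / 2) * n₂ :=
      le_mul_of_one_le_left hn₂ (le_trans ha (le_mul_of_one_le_right ha0.le hP'))
    have k3 : n₃ ≤ a * (a * b - d ^ 2 / 2) * n₃ :=
      le_mul_of_one_le_left hn₃ (le_trans ha (le_mul_of_one_le_right ha0.le hQ'))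
    have k4 : n₄ ≤ a ^ 2 * n₄ :=
      le_mul_of_one_le_left hn₄ (by rw [sq]; exact le_trans ha (le_mul_of_one_le_right ha0.le ha))
    rw [hδ]; linarith
  have hnum : 0 ≤ α * n₁ + γ := by
    have := mul_nonneg hαpos.le hn₁; linarith
  have hle1 : (α * n₁ + γ) / (β * n₁ + δ) ≤ 1 := by
    rw [div_le_one hD]
    have := mul_le_mul_of_nonneg_right hαβ hn₁
    linarith
  constructor
  · linarith
  · have key : α * (β * n₁ + δ) ≤ (α * n₁ + γ) * β := by
      have hcross : α * δ ≤ β * γ := by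
        rw [hα, hβ, hγ, hδ]
        exact cross_aux a b c d n₂ n₃ n₄ ha hb hc.le hd.le hn₂ hn₃ hn₄
      have key2 : (α * n₁ + γ) * β - α * (β * n₁ + δ) = β * γ - α * δ := by ring
      linarith
    have : α / β ≤ (α * n₁ + γ) / (β * n₁ + δ) := by
      rw [div_le_div_iff₀ hβpos hD]
      linarith
    linarith
end

section
/- Fix μ ∈ (0, 1). Then, as n̄ → ∞ along the reals, the function n̄ ↦ 1/((1+2n̄)² - 4μ²·n̄·(1+n̄)) - 9/(( √(4·(1+2n̄)² - 12μ²·n̄·(1+n̄)) + (1+2n̄) )²) tends to 0. -/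
open Filter Real

lemma tendsto_one_add_two_mul_sq_atTop : Tendsto (fun n : ℝ => (1 + 2 * n) ^ 2) atTop atTop :=
  (tendsto_pow_atTop two_ne_zero).comp <|
    tendsto_atTop_add_const_left _ 1 (tendsto_id.const_mul_atTop two_pos)

/-- Completing the square, `4 n (1 + n) = (1 + 2 n)² - 1`. -/
lemma one_add_two_mul_sq_sub_eq (μ n : ℝ) :
    (1 + 2 * n) ^ 2 - 4 * μ ^ 2 * n * (1 + n) = (1 - μ ^ 2) * (1 + 2 * n) ^ 2 + μ ^ 2 := by
  ring

lemma tendsto_one_div_one_add_two_mul_sq_sub {μ : ℝ} (hμ : μ ^ 2 < 1) :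
    Tendsto (fun n : ℝ => 1 / ((1 + 2 * n) ^ 2 - 4 * μ ^ 2 * n * (1 + n))) atTop (nhds 0) := by
  simp only [one_add_two_mul_sq_sub_eq]
  have hden : Tendsto (fun n : ℝ => (1 - μ ^ 2) * (1 + 2 * n) ^ 2 + μ ^ 2) atTop atTop :=
    tendsto_atTop_add_const_right _ _
      (tendsto_one_add_two_mul_sq_atTop.const_mul_atTop (sub_pos.mpr hμ))
  exact tendsto_const_nhds.div_atTop hden

lemma tendsto_div_sqrt_add_one_add_two_mul_sq (c : ℝ) (s : ℝ → ℝ) :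
    Tendsto (fun n : ℝ => c / (√(s n) + (1 + 2 * n)) ^ 2) atTop (nhds 0) := by
  have hle : ∀ᶠ n : ℝ in atTop, (1 + 2 * n) ^ 2 ≤ (√(s n) + (1 + 2 * n)) ^ 2 := by
    filter_upwards [eventually_ge_atTop (0 : ℝ)] with n hn
    exact pow_le_pow_left₀ (by linarith) (le_add_of_nonneg_left (sqrt_nonneg _)) 2
  exact tendsto_const_nhds.div_atTop (tendsto_atTop_mono' _ hle tendsto_one_add_two_mul_sq_atTop)

theorem stmt_14 (μ : ℝ) (hμ : μ ∈ Set.Ioo (0 : ℝ) 1) :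
    Filter.Tendsto
      (fun n : ℝ => 1 / ((1 + 2 * n) ^ 2 - 4 * μ ^ 2 * n * (1 + n)) -
          9 / (Real.sqrt (4 * (1 + 2 * n) ^ 2 - 12 * μ ^ 2 * n * (1 + n)) + (1 + 2 * n)) ^ 2)
      Filter.atTop (nhds 0) := by
  have hμ_sq : μ ^ 2 < 1 := pow_lt_one₀ hμ.1.le hμ.2 two_ne_zero
  simpa using (tendsto_one_div_one_add_two_mul_sq_sub hμ_sq).sub
    (tendsto_div_sqrt_add_one_add_two_mul_sq 9 fun n => 4 * (1 + 2 * n) ^ 2 - 12 * μ ^ 2 * n * (1 + n))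
end

section
/- For every real number n̄ > 0, one has 1 - 1/(1 + 2n̄ + 2n̄²)² > 1 - 9/((1 + 2n̄ + 2·√(1 + n̄ + n̄²))²). -/
theorem stmt_16 (n : ℝ) (hn : 0 < n) :
    1 - 1 / (1 + 2 * n + 2 * n ^ 2) ^ 2 >
      1 - 9 / (1 + 2 * n + 2 * Real.sqrt (1 + n + n ^ 2)) ^ 2 := by
  set s := Real.sqrt (1 + n + n ^ 2) with hs
  have hs0 : 0 ≤ s := Real.sqrt_nonneg _
  have hs2 : s ^ 2 = 1 + n + n ^ 2 := Real.sq_sqrt (by nlinarith)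
  have hslt : s < 1 + 2 * n + 3 * n ^ 2 := by
    rw [hs, show Real.sqrt (1 + n + n ^ 2) < 1 + 2 * n + 3 * n ^ 2 ↔
      1 + n + n ^ 2 < (1 + 2 * n + 3 * n ^ 2) ^ 2 from Real.sqrt_lt' (by nlinarith)]
    nlinarith
  have hA : (0:ℝ) < 1 + 2 * n + 2 * n ^ 2 := by nlinarith
  have hB : (0:ℝ) < 1 + 2 * n + 2 * s := by nlinarith
  have hA2 : (0:ℝ) < (1 + 2 * n + 2 * n ^ 2) ^ 2 := by positivity
  have hB2 : (0:ℝ) < (1 + 2 * n + 2 * s) ^ 2 := by positivity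
  have key : 1 / (1 + 2 * n + 2 * n ^ 2) ^ 2 < 9 / (1 + 2 * n + 2 * s) ^ 2 := by
    rw [div_lt_div_iff₀ hA2 hB2]
    nlinarith [sq_nonneg (1 + 2 * n + 2 * s), mul_pos hA hB]
  linarith
end
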